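/- Fix y > 0 and define, for x > 1, F̃(x) = ∫₁^x √(((u−x)² + y²)(u−1)/u) du, a real integral with the real square root (the integrand is a nonnegative real number for 1 ≤ u ≤ x). Then F̃ is differentiable on (1, ∞) and for every x > 1, F̃'(x) = √( y²(x−1)/x ) + ∫₁^x ( (x−u)(u−1) ) / √( ((u−x)² + y²)(u−1)·u ) du, and F̃'(x) > 0. Moreover F̃(x) equals F(x,y) = Re ∫₀^x √(((u−x)² + y²)(u−1)/u) du for every x > 1, where in F the principal complex square root is used. -/

import Mathlib

open Complex

private lemma aux_hasDerivAt (y : ℝ) (hy : 0 < y) {u : ℝ} (hu : 1 < u) (x' : ℝ) :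
    HasDerivAt (fun x' : ℝ => Real.sqrt ((((u - x') ^ 2 + y ^ 2) * (u - 1)) / u))
      (((x' - u) * (u - 1)) / Real.sqrt (((u - x') ^ 2 + y ^ 2) * (u - 1) * u)) x' := by
  have hu0 : (0:ℝ) < u := lt_trans one_pos hu
  have hA0 : 0 < (u - x') ^ 2 + y ^ 2 := by positivity
  have hr : 0 < ((u - x') ^ 2 + y ^ 2) * (u - 1) / u := by
    apply div_pos (mul_pos hA0 (by linarith)) hu0
  have h1 : HasDerivAt (fun x' : ℝ => (((u - x') ^ 2 + y ^ 2) * (u - 1)) / u)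
      ((2 * (u - x') * (-1)) * (u - 1) / u) x' := by
    have : HasDerivAt (fun x' : ℝ => (u - x') ^ 2 + y ^ 2) (2 * (u - x') ^ 1 * (-1)) x' :=
      (((hasDerivAt_id x').const_sub u).pow 2).add_const _
    simpa using (this.mul_const (u - 1)).div_const u
  have h2 := (Real.hasDerivAt_sqrt (ne_of_gt hr)).comp x' h1
  refine HasDerivAt.congr_deriv h2 (Eq.symm ?_)
  have hs : 0 < Real.sqrt (((u - x') ^ 2 + y ^ 2) * (u - 1) / u) := Real.sqrt_pos.2 hr
  have key : Real.sqrt (((u - x') ^ 2 + y ^ 2) * (u - 1) * u)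
      = Real.sqrt (((u - x') ^ 2 + y ^ 2) * (u - 1) / u) * u := by
    rw [show ((u - x') ^ 2 + y ^ 2) * (u - 1) * u
        = (((u - x') ^ 2 + y ^ 2) * (u - 1) / u) * u ^ 2 by field_simp,
      Real.sqrt_mul hr.le, Real.sqrt_sq hu0.le]
  rw [key]
  field_simp
  ring

private lemma aux_contOn (y c : ℝ) {s : Set ℝ} (hs : ∀ u ∈ s, u ≠ 0) :
    ContinuousOn (fun u : ℝ => Real.sqrt ((((u - c) ^ 2 + y ^ 2) * (u - 1)) / u)) s :=
  Real.continuous_sqrt.comp_continuousOn <|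
    ContinuousOn.div (by fun_prop) continuousOn_id hs

private lemma aux_bound (y : ℝ) (hy : 0 < y) {u : ℝ} (hu : 1 < u) (x' : ℝ) :
    |((x' - u) * (u - 1)) / Real.sqrt (((u - x') ^ 2 + y ^ 2) * (u - 1) * u)|
      ≤ |x' - u| * Real.sqrt (u - 1) / y := by
  have h1 : (0:ℝ) < u - 1 := by linarith
  have hden : y * Real.sqrt (u - 1) ≤ Real.sqrt (((u - x') ^ 2 + y ^ 2) * (u - 1) * u) := by
    have : y * Real.sqrt (u - 1) = Real.sqrt (y ^ 2 * (u - 1)) := by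
      rw [Real.sqrt_mul (by positivity), Real.sqrt_sq hy.le]
    rw [this]
    apply Real.sqrt_le_sqrt
    nlinarith [mul_nonneg h1.le (add_nonneg (mul_nonneg (sq_nonneg (u - x'))
      (by linarith : (0:ℝ) ≤ u)) (mul_nonneg (sq_nonneg y) h1.le))]
  have hdpos : (0:ℝ) < y * Real.sqrt (u - 1) := by positivity
  rw [abs_div, _root_.abs_of_nonneg (Real.sqrt_nonneg _)]
  calc |(x' - u) * (u - 1)| / Real.sqrt (((u - x') ^ 2 + y ^ 2) * (u - 1) * u)
      ≤ |(x' - u) * (u - 1)| / (y * Real.sqrt (u - 1)) :=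
        div_le_div_of_nonneg_left (abs_nonneg _) hdpos hden
    _ = |x' - u| * Real.sqrt (u - 1) / y := by
        rw [abs_mul, _root_.abs_of_pos h1, mul_comm y _, ← div_div, mul_div_assoc, Real.div_sqrt,
          mul_div_assoc]

private lemma aux_meas (y c : ℝ) : MeasureTheory.AEStronglyMeasurable
    (fun u : ℝ => Real.sqrt ((((u - c) ^ 2 + y ^ 2) * (u - 1)) / u))
    (MeasureTheory.volume.restrict (Set.uIoc (1:ℝ) c)) := by
  apply Measurable.aestronglyMeasurable
  fun_prop

private lemma aux_P (y : ℝ) (hy : 0 < y) {x : ℝ} (hx : 1 < x) :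
    HasDerivAt (fun x' : ℝ => ∫ u in (1:ℝ)..x,
        Real.sqrt ((((u - x') ^ 2 + y ^ 2) * (u - 1)) / u))
      (∫ u in (1:ℝ)..x,
        ((x - u) * (u - 1)) / Real.sqrt (((u - x) ^ 2 + y ^ 2) * (u - 1) * u)) x := by
  have hε : (0:ℝ) < (x - 1) / 2 := by linarith
  have h := intervalIntegral.hasDerivAt_integral_of_dominated_loc_of_deriv_le
    (F := fun x' u => Real.sqrt ((((u - x') ^ 2 + y ^ 2) * (u - 1)) / u))
    (F' := fun x' u => ((x' - u) * (u - 1)) / Real.sqrt (((u - x') ^ 2 + y ^ 2) * (u - 1) * u))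
    (a := 1) (b := x) (x₀ := x) (μ := MeasureTheory.volume)
    (bound := fun _ => 2 * x * Real.sqrt x / y) (Metric.ball_mem_nhds x hε)
    (Filter.Eventually.of_forall fun x' => by
      apply Measurable.aestronglyMeasurable; fun_prop)
    ((aux_contOn y x fun u hu => by
        rw [Set.uIcc_of_le hx.le] at hu; exact ne_of_gt (by linarith [hu.1])).intervalIntegrable)
    (by apply Measurable.aestronglyMeasurable; fun_prop)
    (Filter.Eventually.of_forall fun u hu x' hx' => by
      rw [Set.uIoc_of_le hx.le] at hu
      have hu1 : 1 < u := hu.1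
      refine le_trans (aux_bound y hy hu1 x') ?_
      have h1 : |x' - u| ≤ 2 * x := by
        rw [Metric.mem_ball, Real.dist_eq] at hx'
        have := abs_sub_abs_le_abs_sub x' x
        have h2 : |x' - x| < (x - 1) / 2 := hx'
        have h3 : |x' - u| ≤ |x' - x| + |x - u| := abs_sub_le _ _ _
        have h4 : |x - u| ≤ x - 1 := by
          rw [abs_le]; constructor <;> [linarith [hu.2]; linarith]
        linarith
      have h2 : Real.sqrt (u - 1) ≤ Real.sqrt x :=
        Real.sqrt_le_sqrt (by linarith [hu.2])
      have h3 : |x' - u| * Real.sqrt (u - 1) ≤ 2 * x * Real.sqrt x :=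
        mul_le_mul h1 h2 (Real.sqrt_nonneg _) (by linarith)
      show |x' - u| * Real.sqrt (u - 1) / y ≤ 2 * x * Real.sqrt x / y
      gcongr)
    (intervalIntegrable_const)
    (Filter.Eventually.of_forall fun u hu x' hx' => by
      rw [Set.uIoc_of_le hx.le] at hu
      exact aux_hasDerivAt y hy hu.1 x')
  exact h.2

private lemma aux_absle {x x' u : ℝ} (hu : u ∈ Set.uIcc x x') : |u - x| ≤ |x' - x| := by
  rcases le_total x x' with h | h
  · rw [Set.uIcc_of_le h] at hu
    rw [_root_.abs_of_nonneg (by linarith [hu.1] : (0:ℝ) ≤ u - x)]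
    linarith [hu.2, le_abs_self (x' - x)]
  · rw [Set.uIcc_of_ge h] at hu
    rw [_root_.abs_of_nonpos (by linarith [hu.2] : u - x ≤ 0)]
    linarith [hu.1, neg_le_abs (x' - x)]

private lemma aux_Q (y : ℝ) (hy : 0 < y) {x : ℝ} (hx : 1 < x) :
    HasDerivAt (fun x' : ℝ => ∫ u in x..x',
        Real.sqrt ((((u - x') ^ 2 + y ^ 2) * (u - 1)) / u))
      (Real.sqrt ((((x - x) ^ 2 + y ^ 2) * (x - 1)) / x)) x := by
  set C : ℝ := Real.sqrt ((((x - x) ^ 2 + y ^ 2) * (x - 1)) / x) with hC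
  rw [hasDerivAt_iff_isLittleO]
  rw [Asymptotics.isLittleO_iff]
  intro c hc
  have hcont : ContinuousAt
      (fun p : ℝ × ℝ => Real.sqrt ((((p.2 - p.1) ^ 2 + y ^ 2) * (p.2 - 1)) / p.2)) (x, x) := by
    apply Real.continuous_sqrt.continuousAt.comp
    exact ContinuousAt.div (by fun_prop) (by fun_prop) (by simp; positivity)
  rw [Metric.continuousAt_iff] at hcont
  obtain ⟨δ, hδ0, hδ⟩ := hcont c hc
  have hδ'0 : 0 < min δ ((x - 1) / 2) := lt_min hδ0 (by linarith)
  filter_upwards [Metric.ball_mem_nhds x hδ'0] with x' hx'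
  rw [Metric.mem_ball, Real.dist_eq] at hx'
  have hxx : |x' - x| < min δ ((x - 1) / 2) := hx'
  -- integrability of u ↦ g x' u on [x, x']
  have hpos : ∀ u ∈ Set.uIcc x x', (0:ℝ) < u := by
    intro u hu
    have h1 : |u - x| ≤ |x' - x| := aux_absle hu
    have := lt_of_le_of_lt h1 (lt_of_lt_of_le hxx (min_le_right _ _))
    have := abs_lt.1 this
    linarith [this.1]
  have hint : IntervalIntegrable
      (fun u : ℝ => Real.sqrt ((((u - x') ^ 2 + y ^ 2) * (u - 1)) / u))
      MeasureTheory.volume x x' :=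
    (aux_contOn y x' fun u hu => (hpos u hu).ne').intervalIntegrable
  have hsplit : (∫ u in x..x', Real.sqrt ((((u - x') ^ 2 + y ^ 2) * (u - 1)) / u))
      - (∫ u in x..x, Real.sqrt ((((u - x) ^ 2 + y ^ 2) * (u - 1)) / u)) - (x' - x) • C
      = ∫ u in x..x', (Real.sqrt ((((u - x') ^ 2 + y ^ 2) * (u - 1)) / u) - C) := by
    rw [intervalIntegral.integral_same, intervalIntegral.integral_sub hint
      intervalIntegrable_const, intervalIntegral.integral_const]
    ring
  rw [hsplit]
  have hb : ∀ u ∈ Set.uIoc x x',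
      ‖Real.sqrt ((((u - x') ^ 2 + y ^ 2) * (u - 1)) / u) - C‖ ≤ c := by
    intro u hu
    have hu' : u ∈ Set.uIcc x x' := Set.uIoc_subset_uIcc hu
    have h1 : |u - x| ≤ |x' - x| := aux_absle hu'
    have hd : dist (x', u) (x, x) < δ := by
      rw [Prod.dist_eq]
      apply max_lt
      · rw [Real.dist_eq]; exact lt_of_lt_of_le hxx (min_le_left _ _)
      · rw [Real.dist_eq]
        exact lt_of_le_of_lt h1 (lt_of_lt_of_le hxx (min_le_left _ _))
    have := hδ hd
    rw [Real.dist_eq] at this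
    exact le_of_lt this
  calc ‖∫ u in x..x', (Real.sqrt ((((u - x') ^ 2 + y ^ 2) * (u - 1)) / u) - C)‖
      ≤ c * |x' - x| := intervalIntegral.norm_integral_le_of_norm_le_const hb
    _ = c * ‖x' - x‖ := by rw [Real.norm_eq_abs]

private lemma aux_deriv (y : ℝ) (hy : 0 < y) {x : ℝ} (hx : 1 < x) :
    HasDerivAt (fun x' : ℝ => ∫ u in (1:ℝ)..x',
        Real.sqrt ((((u - x') ^ 2 + y ^ 2) * (u - 1)) / u))
      (Real.sqrt (y ^ 2 * (x - 1) / x)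
        + ∫ u in (1:ℝ)..x,
            ((x - u) * (u - 1)) / Real.sqrt (((u - x) ^ 2 + y ^ 2) * (u - 1) * u)) x := by
  have h := (aux_Q y hy hx).add (aux_P y hy hx)
  have heq : (fun x' : ℝ => ∫ u in (1:ℝ)..x',
        Real.sqrt ((((u - x') ^ 2 + y ^ 2) * (u - 1)) / u))
      =ᶠ[nhds x] (fun x' : ℝ =>
        (∫ u in x..x', Real.sqrt ((((u - x') ^ 2 + y ^ 2) * (u - 1)) / u))
        + ∫ u in (1:ℝ)..x, Real.sqrt ((((u - x') ^ 2 + y ^ 2) * (u - 1)) / u)) := by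
    filter_upwards [Metric.ball_mem_nhds x (show (0:ℝ) < (x-1)/2 by linarith)] with x' hx'
    rw [Metric.mem_ball, Real.dist_eq] at hx'
    have h1 : IntervalIntegrable
        (fun u : ℝ => Real.sqrt ((((u - x') ^ 2 + y ^ 2) * (u - 1)) / u))
        MeasureTheory.volume 1 x :=
      (aux_contOn y x' fun u hu => by
        rw [Set.uIcc_of_le hx.le] at hu; exact ne_of_gt (by linarith [hu.1])).intervalIntegrable
    have h2 : IntervalIntegrable
        (fun u : ℝ => Real.sqrt ((((u - x') ^ 2 + y ^ 2) * (u - 1)) / u))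
        MeasureTheory.volume x x' :=
      (aux_contOn y x' fun u hu => by
        have := aux_absle hu
        have := abs_lt.1 (lt_of_le_of_lt this hx')
        have : 0 < u := by linarith [this.1]
        exact this.ne').intervalIntegrable
    rw [← intervalIntegral.integral_add_adjacent_intervals h1 h2]
    ring
  refine HasDerivAt.congr_of_eventuallyEq ?_ heq
  rw [show y ^ 2 * (x - 1) / x = ((x - x) ^ 2 + y ^ 2) * (x - 1) / x from by ring]
  exact h

private lemma aux_pos_case {r : ℝ} (hr : 0 ≤ r) :
    ((r : ℂ)) ^ (1/2 : ℂ) = ((Real.sqrt r : ℝ) : ℂ) := by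
  rw [show (1/2 : ℂ) = (((1/2 : ℝ) : ℝ) : ℂ) by norm_num, ← Complex.ofReal_cpow hr,
    Real.sqrt_eq_rpow]

private lemma aux_neg_case {r : ℝ} (hr : r ≤ 0) :
    ((r : ℂ)) ^ (1/2 : ℂ) = Complex.I * ((Real.sqrt (-r) : ℝ) : ℂ) := by
  rw [Complex.ofReal_cpow_of_nonpos hr,
    show (-(r:ℂ)) = ((-r : ℝ) : ℂ) by push_cast; ring, aux_pos_case (neg_nonneg.2 hr)]
  have h2 : Complex.exp (↑Real.pi * Complex.I * (1/2 : ℂ)) = Complex.I := by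
    rw [show (↑Real.pi * Complex.I * (1/2 : ℂ)) = ((Real.pi/2 : ℝ) : ℂ) * Complex.I by
        push_cast; ring, Complex.exp_mul_I,
      show ((Real.pi/2 : ℝ) : ℂ) = (↑Real.pi/2 : ℂ) by push_cast; ring]
    simp [Complex.cos_pi_div_two, Complex.sin_pi_div_two]
  rw [h2]; ring

private lemma aux_cast (x y u : ℝ) :
    (((u : ℂ) - (x : ℂ)) ^ 2 + (y : ℂ) ^ 2) * ((u : ℂ) - 1) / (u : ℂ)
      = (((((u - x) ^ 2 + y ^ 2) * (u - 1)) / u : ℝ) : ℂ) := by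
  push_cast; ring

/-- For fixed `y > 0`, the real integral `F̃(x) = ∫₁^x √(((u-x)²+y²)(u-1)/u) du` is
differentiable on `(1,∞)` with the stated positive derivative, and it coincides with
`F(x,y) = Re ∫₀^x √(((u-x)²+y²)(u-1)/u) du` (principal complex square root in `F`). -/
theorem stmt_10 (y : ℝ) (hy : 0 < y) :
    ∀ x : ℝ, 1 < x →
      HasDerivAt (fun x' : ℝ => ∫ u in (1 : ℝ)..x',
          Real.sqrt ((((u - x') ^ 2 + y ^ 2) * (u - 1)) / u))
        (Real.sqrt (y ^ 2 * (x - 1) / x)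
          + ∫ u in (1 : ℝ)..x,
              ((x - u) * (u - 1)) / Real.sqrt (((u - x) ^ 2 + y ^ 2) * (u - 1) * u)) x
      ∧ 0 < Real.sqrt (y ^ 2 * (x - 1) / x)
          + ∫ u in (1 : ℝ)..x,
              ((x - u) * (u - 1)) / Real.sqrt (((u - x) ^ 2 + y ^ 2) * (u - 1) * u)
      ∧ (∫ u in (1 : ℝ)..x, Real.sqrt ((((u - x) ^ 2 + y ^ 2) * (u - 1)) / u))
          = (∫ u in (0 : ℝ)..x,
              ((((u : ℂ) - (x : ℂ)) ^ 2 + (y : ℂ) ^ 2) * ((u : ℂ) - 1) / (u : ℂ))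
                ^ (1/2 : ℂ)).re := by
  intro x hx
  refine ⟨aux_deriv y hy hx, ?_, ?_⟩
  · have h1 : 0 < Real.sqrt (y ^ 2 * (x - 1) / x) := Real.sqrt_pos.2
      (by have h1 : 0 < x - 1 := by linarith
          have h2 : 0 < x := by linarith
          positivity)
    have h2 : 0 ≤ ∫ u in (1:ℝ)..x,
        ((x - u) * (u - 1)) / Real.sqrt (((u - x) ^ 2 + y ^ 2) * (u - 1) * u) := by
      apply intervalIntegral.integral_nonneg hx.le
      intro u hu
      have := hu.1; have := hu.2
      apply div_nonneg _ (Real.sqrt_nonneg _)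
      nlinarith
    linarith
  · set r : ℝ → ℝ := fun u => (((u - x) ^ 2 + y ^ 2) * (u - 1)) / u with hr_def
    set f : ℝ → ℂ := fun u : ℝ =>
      ((((u : ℂ) - (x : ℂ)) ^ 2 + (y : ℂ) ^ 2) * ((u : ℂ) - 1) / (u : ℂ)) ^ (1/2 : ℂ) with hf_def
    have hneg : ∀ u ∈ Set.Icc (0:ℝ) 1, r u ≤ 0 := by
      intro u hu
      rcases eq_or_lt_of_le hu.1 with h | h
      · simp [hr_def, ← h]
      · apply div_nonpos_of_nonpos_of_nonneg _ (le_of_lt h)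
        apply mul_nonpos_of_nonneg_of_nonpos (by positivity)
        linarith [hu.2]
    have hpos : ∀ u ∈ Set.Icc (1:ℝ) x, 0 ≤ r u := by
      intro u hu
      apply div_nonneg _ (by linarith [hu.1])
      apply mul_nonneg (by positivity) (by linarith [hu.1])
    have hpt0 : Set.EqOn f (fun u => Complex.I * ((Real.sqrt (-(r u)) : ℝ) : ℂ))
        (Set.uIcc (0:ℝ) 1) := by
      rw [Set.uIcc_of_le zero_le_one]
      intro u hu
      show f u = _
      rw [hf_def]
      simp only []
      rw [aux_cast x y u, aux_neg_case (hneg u hu)]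
    have hpt1 : Set.EqOn f (fun u => ((Real.sqrt (r u) : ℝ) : ℂ)) (Set.uIcc (1:ℝ) x) := by
      rw [Set.uIcc_of_le hx.le]
      intro u hu
      show f u = _
      rw [hf_def]
      simp only []
      rw [aux_cast x y u, aux_pos_case (hpos u hu)]
    have hreal0 : IntervalIntegrable (fun u => Real.sqrt (-(r u)))
        MeasureTheory.volume 0 1 := by
      apply IntervalIntegrable.mono_fun'
        (g := fun u => Real.sqrt (x ^ 2 + y ^ 2) * u ^ (-(1/2) : ℝ))
      · exact (intervalIntegral.intervalIntegrable_rpow' (by norm_num)).const_mul _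
      · apply Measurable.aestronglyMeasurable; fun_prop
      · filter_upwards [MeasureTheory.self_mem_ae_restrict measurableSet_uIoc] with u hu
        rw [Set.uIoc_of_le zero_le_one] at hu
        have hu0 : 0 < u := hu.1
        have hu1 : u ≤ 1 := hu.2
        rw [Real.norm_eq_abs, _root_.abs_of_nonneg (Real.sqrt_nonneg _)]
        have hb : -(r u) ≤ (x ^ 2 + y ^ 2) / u := by
          rw [hr_def]
          simp only []
          rw [← neg_div]
          have hnum : -(((u - x) ^ 2 + y ^ 2) * (u - 1)) ≤ x ^ 2 + y ^ 2 := by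
            nlinarith [mul_nonneg hu0.le (by linarith : (0:ℝ) ≤ 2 * x - u),
              mul_nonneg (sq_nonneg (u - x)) hu0.le, mul_nonneg (sq_nonneg y) hu0.le]
          gcongr
        calc Real.sqrt (-(r u)) ≤ Real.sqrt ((x ^ 2 + y ^ 2) / u) := Real.sqrt_le_sqrt hb
          _ = Real.sqrt (x ^ 2 + y ^ 2) * u ^ (-(1/2) : ℝ) := by
            rw [Real.sqrt_div (by positivity), Real.rpow_neg hu0.le, ← Real.sqrt_eq_rpow,
              div_eq_mul_inv]
    have hreal0' : IntervalIntegrable (fun u => ((Real.sqrt (-(r u)) : ℝ) : ℂ))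
        MeasureTheory.volume 0 1 := by
      constructor
      · exact (hreal0.1).ofReal
      · exact (hreal0.2).ofReal
    have hint0 : IntervalIntegrable f MeasureTheory.volume 0 1 := by
      apply (hreal0'.const_mul Complex.I).congr
      intro u hu
      exact (hpt0 (Set.uIoc_subset_uIcc hu)).symm
    have hint1 : IntervalIntegrable f MeasureTheory.volume 1 x := by
      have hc : IntervalIntegrable (fun u => ((Real.sqrt (r u) : ℝ) : ℂ))
          MeasureTheory.volume 1 x := by
        apply ContinuousOn.intervalIntegrable
        apply Complex.continuous_ofReal.comp_continuousOn
        exact aux_contOn y x fun u hu => by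
          rw [Set.uIcc_of_le hx.le] at hu; exact ne_of_gt (by linarith [hu.1])
      apply hc.congr
      intro u hu
      exact (hpt1 (Set.uIoc_subset_uIcc hu)).symm
    rw [show (∫ u in (0 : ℝ)..x,
          ((((u : ℂ) - (x : ℂ)) ^ 2 + (y : ℂ) ^ 2) * ((u : ℂ) - 1) / (u : ℂ)) ^ (1/2 : ℂ))
        = (∫ u in (0:ℝ)..1, f u) + ∫ u in (1:ℝ)..x, f u from
      (intervalIntegral.integral_add_adjacent_intervals hint0 hint1).symm]
    rw [intervalIntegral.integral_congr hpt0, intervalIntegral.integral_congr hpt1,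
      intervalIntegral.integral_const_mul, intervalIntegral.integral_ofReal,
      intervalIntegral.integral_ofReal]
    simp [hr_def]
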